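/- arXiv:2002.01613 — 6 statements merged into one kernel-verified Lean document; each statement's English description precedes it below -/
import Mathlib

section
/- Let X be a separable Banach space over 𝕜 (𝕜 = ℝ or ℂ), let T and S be bounded linear operators on X with T = λ•I + S for some scalar λ ∈ 𝕜, and suppose T is hypercyclic. Then the following are equivalent: (i) T satisfies the Hypercyclicity Criterion; (ii) T satisfies the Cyclicity Criterion; (iii) S satisfies the Cyclicity Criterion; (iv) S ⊕ S is cyclic; (v) T ⊕ T is cyclic; (vi) T ⊕ T is hypercyclic. -/
open Filter Topology Polynomial

variable {𝕜 X : Type*} [RCLike 𝕜] [NormedAddCommGroup X] [NormedSpace 𝕜 X]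

/-- `T` is hypercyclic: some vector has dense orbit. -/
def Hypercyclic (T : X →L[𝕜] X) : Prop :=
  ∃ x : X, Dense (Set.range fun n : ℕ => (T ^ n) x)

/-- `T` is cyclic: the span of some orbit is dense. -/
def Cyclic (T : X →L[𝕜] X) : Prop :=
  ∃ x : X, Dense (Submodule.span 𝕜 (Set.range fun n : ℕ => (T ^ n) x) : Set X)

/-- The Hypercyclicity Criterion. -/
def HypercyclicityCriterion (T : X →L[𝕜] X) : Prop :=
  ∃ (X₀ Y₀ : Set X) (n : ℕ → ℕ) (S : ℕ → X → X),
    Dense X₀ ∧ Dense Y₀ ∧ StrictMono n ∧ (∀ k, 0 < n k) ∧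
    (∀ x ∈ X₀, Tendsto (fun k => (T ^ n k) x) atTop (𝓝 0)) ∧
    (∀ y ∈ Y₀, Tendsto (fun k => S k y) atTop (𝓝 0)) ∧
    (∀ y ∈ Y₀, Tendsto (fun k => (T ^ n k) (S k y)) atTop (𝓝 y))

/-- The Cyclicity Criterion. -/
def CyclicityCriterion (T : X →L[𝕜] X) : Prop :=
  ∃ (V W : Set X) (p : ℕ → Polynomial 𝕜) (S : ℕ → X → X),
    Dense V ∧ Dense W ∧
    (∀ x ∈ V, Tendsto (fun k => aeval T (p k) x) atTop (𝓝 0)) ∧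
    (∀ x ∈ W, Tendsto (fun k => S k x) atTop (𝓝 0)) ∧
    (∀ x ∈ W, Tendsto (fun k => aeval T (p k) (S k x)) atTop (𝓝 x))

/-!
The span of the `T`-orbit of `v` is `{p(T) v : p a polynomial}`, which does not change when `T`
is replaced by `T - λ`; this gives (ii) ⇔ (iii) and (iv) ⇔ (v).

If `(x, y)` is a cyclic (resp. hypercyclic) vector of `T ⊕ T`, choose polynomials `p_k`
(resp. powers `T ^ n_k` with `n_k` increasing) with `p_k(T) x ≈ 0` and `p_k(T) y ≈ (k + 1) x`.
Everything in sight commutes with `p_k(T)`, so the maps `q(T) x ↦ (k + 1)⁻¹ q(T) y` witness the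
Cyclicity (resp. Hypercyclicity) Criterion on the dense set `{q(T) x}`.

Conversely, the Cyclicity Criterion passes from `T` to `T ⊕ T`, so for boxes `U₁ × U₂` and
`V₁ × V₂` there is one polynomial `p` for which `U₁ ∩ p(T)⁻¹ U₂` and `V₁ ∩ p(T)⁻¹ V₂` are both
nonempty. A hypercyclic vector `x` of `T` then puts `(T^m x, p(T) T^m x)` in `U₁ × U₂` and one of
its `T ⊕ T`-iterates in `V₁ × V₂`: `T ⊕ T` is topologically transitive, hence hypercyclic by
Birkhoff's theorem.
-/

open Set Metric TopologicalSpace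

section Birkhoff

variable {E : Type*} [TopologicalSpace E] [Nonempty E] [BaireSpace E] [SecondCountableTopology E]

theorem exists_denseRange_iterate_of_transitive {f : E → E} (hf : Continuous f)
    (htrans : ∀ U V : Set E, IsOpen U → IsOpen V → U.Nonempty → V.Nonempty →
      ∃ n, (U ∩ f^[n] ⁻¹' V).Nonempty) :
    ∃ x, DenseRange fun n => f^[n] x := by
  have hopen : ∀ s ∈ countableBasis E, IsOpen (⋃ n, f^[n] ⁻¹' s) := fun s hs =>
    isOpen_iUnion fun n => (isOpen_of_mem_countableBasis hs).preimage (hf.iterate n)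
  have hdense : ∀ s ∈ countableBasis E, Dense (⋃ n, f^[n] ⁻¹' s) := by
    intro s hs
    refine dense_iff_inter_open.2 fun U hU hUne => ?_
    obtain ⟨n, u, hu, hun⟩ := htrans U s hU (isOpen_of_mem_countableBasis hs) hUne
      (nonempty_of_mem_countableBasis hs)
    exact ⟨u, hu, mem_iUnion.2 ⟨n, hun⟩⟩
  obtain ⟨x, hx⟩ := (dense_biInter_of_isOpen hopen (countable_countableBasis E) hdense).nonempty
  refine ⟨x, (isBasis_countableBasis E).dense_iff.2 fun s hs _ => ?_⟩
  obtain ⟨n, hn⟩ := mem_iUnion.1 (mem_iInter₂.1 hx s hs)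
  exact ⟨_, hn, n, rfl⟩

end Birkhoff

theorem DenseRange.pow_apply {T : X →L[𝕜] X} {x : X} (hx : DenseRange fun n => (T ^ n) x)
    (m : ℕ) : DenseRange fun n => (T ^ n) ((T ^ m) x) := by
  rcases subsingleton_or_nontrivial X with hX | hX
  · exact fun v => subset_closure (Subsingleton.elim _ v ▸ mem_range_self 0)
  have : ∀ v : X, (𝓝[≠] v).NeBot := fun v => Module.punctured_nhds_neBot 𝕜 X v
  refine (hx.sdiff_finite ((finite_lt_nat m).image fun n => (T ^ n) x)).mono ?_
  rintro _ ⟨⟨n, rfl⟩, hn⟩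
  have hmn : m ≤ n := not_lt.1 fun h => hn ⟨n, h, rfl⟩
  refine ⟨n - m, ?_⟩
  change (T ^ (n - m) * T ^ m) x = (T ^ n) x
  rw [← pow_add, Nat.sub_add_cancel hmn]

section ProdMap

variable {Y : Type*} [NormedAddCommGroup Y] [NormedSpace 𝕜 Y]

theorem prodMap_pow_apply (T : X →L[𝕜] X) (U : Y →L[𝕜] Y) (n : ℕ) (a : X) (b : Y) :
    ((T.prodMap U) ^ n) (a, b) = ((T ^ n) a, (U ^ n) b) := by
  simp only [pow_apply_eq_iterate, ContinuousLinearMap.coe_prodMap', Prod.map_iterate,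
    Prod.map_apply]

theorem aeval_prodMap_apply (T : X →L[𝕜] X) (U : Y →L[𝕜] Y) (p : Polynomial 𝕜) (a : X) (b : Y) :
    aeval (T.prodMap U) p (a, b) = (aeval T p a, aeval U p b) := by
  induction p using Polynomial.induction_on' with
  | add p q hp hq => simp [hp, hq]
  | monomial n c => simp [aeval_monomial, Algebra.algebraMap_eq_smul_one]

end ProdMap

theorem span_orbit_eq_range_aeval (T : X →L[𝕜] X) (x : X) :
    (Submodule.span 𝕜 (range fun n => (T ^ n) x) : Set X) =
      range fun p : Polynomial 𝕜 => aeval T p x := by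
  let L : Polynomial 𝕜 →ₗ[𝕜] X :=
    (ContinuousLinearMap.apply 𝕜 X x).toLinearMap ∘ₗ (aeval T).toLinearMap
  have hL : (fun n => (T ^ n) x) = L ∘ Polynomial.basisMonomials 𝕜 := by ext n; simp [L]
  rw [hL, range_comp, ← Submodule.map_span, (Polynomial.basisMonomials 𝕜).span_eq,
    Submodule.map_top, LinearMap.coe_range]
  rfl

theorem aeval_smul_id_add (S : X →L[𝕜] X) (c : 𝕜) (p : Polynomial 𝕜) :
    aeval (c • ContinuousLinearMap.id 𝕜 X + S) p = aeval S (p.comp (C c + Polynomial.X)) := by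
  simp [aeval_comp, Algebra.algebraMap_eq_smul_one, ContinuousLinearMap.one_def]

theorem prodMap_smul_id_add (S : X →L[𝕜] X) (c : 𝕜) :
    (c • ContinuousLinearMap.id 𝕜 X + S).prodMap (c • ContinuousLinearMap.id 𝕜 X + S) =
      c • ContinuousLinearMap.id 𝕜 (X × X) + S.prodMap S := by
  ext <;> simp

theorem Hypercyclic.cyclic {T : X →L[𝕜] X} (h : Hypercyclic T) : Cyclic T :=
  let ⟨x, hx⟩ := h
  ⟨x, hx.mono Submodule.subset_span⟩

theorem Cyclic.of_eq_smul_id_add {T S : X →L[𝕜] X} {c : 𝕜}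
    (hTS : T = c • ContinuousLinearMap.id 𝕜 X + S) (h : Cyclic T) : Cyclic S := by
  obtain ⟨x, hx⟩ := h
  refine ⟨x, ?_⟩
  rw [span_orbit_eq_range_aeval] at hx ⊢
  refine hx.mono ?_
  rintro _ ⟨p, rfl⟩
  exact ⟨p.comp (C c + Polynomial.X), by simp only [hTS, aeval_smul_id_add]⟩

theorem HypercyclicityCriterion.cyclicityCriterion {T : X →L[𝕜] X}
    (h : HypercyclicityCriterion T) : CyclicityCriterion T := by
  obtain ⟨X₀, Y₀, n, R, hX₀, hY₀, -, -, hT, hR, hTR⟩ := h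
  exact ⟨X₀, Y₀, fun k => Polynomial.X ^ n k, R, hX₀, hY₀, by simpa using hT, hR,
    by simpa using hTR⟩

theorem CyclicityCriterion.of_eq_smul_id_add {T S : X →L[𝕜] X} {c : 𝕜}
    (hTS : T = c • ContinuousLinearMap.id 𝕜 X + S) (h : CyclicityCriterion T) :
    CyclicityCriterion S := by
  obtain ⟨V, W, p, R, hV, hW, hp, hR, hpR⟩ := h
  refine ⟨V, W, fun k => (p k).comp (C c + Polynomial.X), R, hV, hW, fun v hv => ?_, hR,
    fun w hw => ?_⟩
  · simpa only [hTS, aeval_smul_id_add] using hp v hv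
  · simpa only [hTS, aeval_smul_id_add] using hpR w hw

theorem CyclicityCriterion.prodMap {T : X →L[𝕜] X} (h : CyclicityCriterion T) :
    CyclicityCriterion (T.prodMap T) := by
  obtain ⟨V, W, p, R, hV, hW, hp, hR, hpR⟩ := h
  refine ⟨V ×ˢ V, W ×ˢ W, p, fun k => Prod.map (R k) (R k), hV.prod hV, hW.prod hW, ?_, ?_, ?_⟩
  · rintro ⟨a, b⟩ ⟨ha, hb⟩
    simpa only [aeval_prodMap_apply, Prod.mk_zero_zero] using (hp a ha).prodMk_nhds (hp b hb)
  · rintro ⟨a, b⟩ ⟨ha, hb⟩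
    simpa only [Prod.map_apply, Prod.mk_zero_zero] using (hR a ha).prodMk_nhds (hR b hb)
  · rintro ⟨a, b⟩ ⟨ha, hb⟩
    simpa only [Prod.map_apply, aeval_prodMap_apply] using (hpR a ha).prodMk_nhds (hpR b hb)

theorem CyclicityCriterion.exists_aeval_mem {T : X →L[𝕜] X} (h : CyclicityCriterion T)
    {U U' : Set X} (hU : IsOpen U) (hU' : IsOpen U') (hUne : U.Nonempty) (hU'ne : U'.Nonempty) :
    ∃ p : Polynomial 𝕜, (U ∩ aeval T p ⁻¹' U').Nonempty := by
  obtain ⟨V, W, p, R, hV, hW, hp, hR, hpR⟩ := h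
  obtain ⟨v, hvV, hvU⟩ := hV.exists_mem_open hU hUne
  obtain ⟨w, hwW, hwU'⟩ := hW.exists_mem_open hU' hU'ne
  have hstart : Tendsto (fun k => v + R k w) atTop (𝓝 v) := by
    simpa using tendsto_const_nhds.add (hR w hwW)
  have hend : Tendsto (fun k => aeval T (p k) (v + R k w)) atTop (𝓝 w) := by
    simpa using (hp v hvV).add (hpR w hwW)
  obtain ⟨k, hk, hk'⟩ :=
    ((hstart.eventually_mem (hU.mem_nhds hvU)).and (hend.eventually_mem (hU'.mem_nhds hwU'))).exists
  exact ⟨p k, _, hk, hk'⟩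

theorem hypercyclic_prodMap_of_cyclicityCriterion [CompleteSpace X]
    [TopologicalSpace.SeparableSpace X] {T : X →L[𝕜] X} (hT : Hypercyclic T)
    (h : CyclicityCriterion T) : Hypercyclic (T.prodMap T) := by
  have := UniformSpace.secondCountable_of_separable X
  obtain ⟨x, hx⟩ := hT
  suffices htrans : ∀ O O' : Set (X × X), IsOpen O → IsOpen O' → O.Nonempty → O'.Nonempty →
      ∃ n, (O ∩ (T.prodMap T)^[n] ⁻¹' O').Nonempty by
    obtain ⟨z, hz⟩ := exists_denseRange_iterate_of_transitive (T.prodMap T).continuous htrans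
    refine ⟨z, ?_⟩
    simp only [pow_apply_eq_iterate]
    exact hz
  rintro O O' hO hO' ⟨a, ha⟩ ⟨b, hb⟩
  obtain ⟨U₁, U₂, hU₁, hU₂, ha₁, ha₂, hU⟩ := isOpen_prod_iff.1 hO a.1 a.2 ha
  obtain ⟨V₁, V₂, hV₁, hV₂, hb₁, hb₂, hV⟩ := isOpen_prod_iff.1 hO' b.1 b.2 hb
  obtain ⟨p, ⟨u, v⟩, ⟨hu, hv⟩, hpuv⟩ := h.prodMap.exists_aeval_mem (hU₁.prod hV₁) (hU₂.prod hV₂)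
    ⟨(a.1, b.1), ha₁, hb₁⟩ ⟨(a.2, b.2), ha₂, hb₂⟩
  rw [mem_preimage, aeval_prodMap_apply, mem_prod] at hpuv
  obtain ⟨m, hm₁, hm₂⟩ := DenseRange.exists_mem_open hx
    (hU₁.inter (hU₂.preimage (aeval T p).continuous)) ⟨u, hu, hpuv.1⟩
  obtain ⟨n, hn₁, hn₂⟩ := (DenseRange.pow_apply hx m).exists_mem_open
    (hV₁.inter (hV₂.preimage (aeval T p).continuous)) ⟨v, hv, hpuv.2⟩
  refine ⟨n, ((T ^ m) x, aeval T p ((T ^ m) x)), hU ⟨hm₁, hm₂⟩, hV ?_⟩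
  have hcomm : (T ^ n) (aeval T p ((T ^ m) x)) = aeval T p ((T ^ n) ((T ^ m) x)) := by
    simpa using DFunLike.congr_fun ((Commute.all (Polynomial.X ^ n) p).map (aeval T)).eq _
  rw [← pow_apply_eq_iterate, prodMap_pow_apply, hcomm]
  exact ⟨hn₁, hn₂⟩

theorem tendsto_of_forall_mem_ball {c : ℕ → 𝕜} (hc : Tendsto c atTop (𝓝 0)) (hc0 : ∀ k, c k ≠ 0)
    {x : X} {u : ℕ → X × X} (hu : ∀ k, u k ∈ ball (0, (c k)⁻¹ • x) ‖c k‖) :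
    Tendsto (fun k => (u k).1) atTop (𝓝 0) ∧ Tendsto (fun k => c k • (u k).2) atTop (𝓝 x) := by
  have hnorm : Tendsto (fun k => ‖c k‖) atTop (𝓝 0) := by simpa using hc.norm
  replace hu : ∀ k, ‖(u k).1‖ < ‖c k‖ ∧ ‖(u k).2 - (c k)⁻¹ • x‖ < ‖c k‖ := fun k => by
    simpa [← ball_prod_same, dist_eq_norm] using hu k
  constructor
  · exact squeeze_zero_norm (fun k => (hu k).1.le) hnorm
  · rw [tendsto_iff_norm_sub_tendsto_zero]
    refine squeeze_zero (fun k => norm_nonneg _) (fun k => ?_) (by simpa using hnorm.mul hnorm)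
    calc ‖c k • (u k).2 - x‖ = ‖c k‖ * ‖(u k).2 - (c k)⁻¹ • x‖ := by
          rw [← norm_smul, smul_sub, smul_inv_smul₀ (hc0 k)]
      _ ≤ ‖c k‖ * ‖c k‖ := by gcongr; exact (hu k).2.le

theorem exists_approx_right_inverse {ι : Type*} [Nonempty ι] (B : ι → X →L[𝕜] X) {A : ℕ → X →L[𝕜] X}
    {c : ℕ → 𝕜} {x y : X} (hcomm : ∀ k i, Commute (A k) (B i)) (hc : Tendsto c atTop (𝓝 0))
    (hx : Tendsto (fun k => A k x) atTop (𝓝 0)) (hy : Tendsto (fun k => c k • A k y) atTop (𝓝 x)) :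
    ∃ R : ℕ → X → X, ∀ w ∈ range fun i => B i x,
      Tendsto (fun k => A k w) atTop (𝓝 0) ∧ Tendsto (fun k => R k w) atTop (𝓝 0) ∧
        Tendsto (fun k => A k (R k w)) atTop (𝓝 w) := by
  have hrange : ∀ w ∈ range fun i => B i x, ∃ i, B i x = w := fun w hw => hw
  choose! j hj using hrange
  refine ⟨fun k w => c k • B (j w) y, fun w hw => ?_⟩
  beta_reduce
  have hw' := hj w hw
  generalize j w = i at hw' ⊢
  subst hw'
  have hAB : ∀ k v, A k (B i v) = B i (A k v) := fun k v => DFunLike.congr_fun (hcomm k i).eq v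
  refine ⟨?_, by simpa using hc.smul_const (B i y), ?_⟩
  · simpa only [hAB, map_zero, Function.comp_def] using ((B i).continuous.tendsto 0).comp hx
  · simpa only [map_smul, hAB, Function.comp_def] using ((B i).continuous.tendsto x).comp hy

theorem cyclicityCriterion_of_cyclic_prodMap {T : X →L[𝕜] X} (h : Cyclic (T.prodMap T)) :
    CyclicityCriterion T := by
  obtain ⟨⟨x, y⟩, hz⟩ := h
  simp only [span_orbit_eq_range_aeval, aeval_prodMap_apply] at hz
  have hx : DenseRange fun p : Polynomial 𝕜 => aeval T p x :=
    Prod.fst_surjective.denseRange.comp hz continuous_fst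
  set c : ℕ → 𝕜 := fun k => ((k + 1 : ℕ) : 𝕜)⁻¹
  have hc : Tendsto c atTop (𝓝 0) := tendsto_inv_atTop_nhds_zero_nat.comp (tendsto_add_atTop_nat 1)
  have hc0 : ∀ k, c k ≠ 0 := fun k => inv_ne_zero (Nat.cast_ne_zero.2 k.succ_ne_zero)
  have hp : ∀ k, ∃ p : Polynomial 𝕜,
      (aeval T p x, aeval T p y) ∈ ball (0, (c k)⁻¹ • x) ‖c k‖ := fun k =>
    (DenseRange.exists_dist_lt hz _ (norm_pos_iff.2 (hc0 k))).imp fun p hp => by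
      rwa [mem_ball, dist_comm]
  choose p hp using hp
  obtain ⟨hpx, hpy⟩ := tendsto_of_forall_mem_ball hc hc0 hp
  obtain ⟨R, hR⟩ := exists_approx_right_inverse (aeval T)
    (fun k q => (Commute.all (p k) q).map (aeval T)) hc hpx hpy
  exact ⟨_, _, p, R, hx, hx, fun w hw => (hR w hw).1, fun w hw => (hR w hw).2.1,
    fun w hw => (hR w hw).2.2⟩

theorem hypercyclicityCriterion_of_hypercyclic_prodMap {T : X →L[𝕜] X}
    (h : Hypercyclic (T.prodMap T)) : HypercyclicityCriterion T := by
  obtain ⟨⟨x, y⟩, hz⟩ := h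
  set c : ℕ → 𝕜 := fun k => ((k + 1 : ℕ) : 𝕜)⁻¹
  have hc : Tendsto c atTop (𝓝 0) := tendsto_inv_atTop_nhds_zero_nat.comp (tendsto_add_atTop_nat 1)
  have hc0 : ∀ k, c k ≠ 0 := fun k => inv_ne_zero (Nat.cast_ne_zero.2 k.succ_ne_zero)
  have hfreq : ∀ k, ∃ᶠ n in atTop,
      0 < n ∧ ((T.prodMap T) ^ n) (x, y) ∈ ball (0, (c k)⁻¹ • x) ‖c k‖ := by
    refine fun k => frequently_atTop.2 fun N => ?_
    obtain ⟨m, hm⟩ := DenseRange.exists_dist_lt (DenseRange.pow_apply hz (N + 1)) _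
      (norm_pos_iff.2 (hc0 k))
    refine ⟨m + (N + 1), by omega, by omega, ?_⟩
    rw [pow_add, mem_ball, dist_comm]
    exact hm
  obtain ⟨n, hn, hnk⟩ := extraction_forall_of_frequently hfreq
  have hpos : ∀ k, 0 < n k := fun k => (hnk k).1
  have hmem := fun k => (hnk k).2
  simp only [prodMap_pow_apply] at hz hmem
  have hx : DenseRange fun m => (T ^ m) x := Prod.fst_surjective.denseRange.comp hz continuous_fst
  obtain ⟨hnx, hny⟩ := tendsto_of_forall_mem_ball hc hc0 hmem
  obtain ⟨R, hR⟩ := exists_approx_right_inverse (fun m => T ^ m)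
    (fun k m => Commute.pow_pow_self T (n k) m) hc hnx hny
  exact ⟨_, _, n, R, hx, hx, hn, hpos, fun w hw => (hR w hw).1, fun w hw => (hR w hw).2.1,
    fun w hw => (hR w hw).2.2⟩

theorem main_theorem [CompleteSpace X] [TopologicalSpace.SeparableSpace X]
    (T S : X →L[𝕜] X) (lam : 𝕜)
    (hTS : T = lam • ContinuousLinearMap.id 𝕜 X + S)
    (hT : Hypercyclic T) :
    List.TFAE [HypercyclicityCriterion T,
               CyclicityCriterion T,
               CyclicityCriterion S,
               Cyclic (S.prodMap S),
               Cyclic (T.prodMap T),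
               Hypercyclic (T.prodMap T)] := by
  have hST : S = (-lam) • ContinuousLinearMap.id 𝕜 X + T := by
    rw [hTS, neg_smul]; abel
  have hTS₂ : T.prodMap T = lam • ContinuousLinearMap.id 𝕜 (X × X) + S.prodMap S := by
    rw [hTS, prodMap_smul_id_add]
  tfae_have 1 → 2 := HypercyclicityCriterion.cyclicityCriterion
  tfae_have 2 → 6 := hypercyclic_prodMap_of_cyclicityCriterion hT
  tfae_have 6 → 1 := hypercyclicityCriterion_of_hypercyclic_prodMap
  tfae_have 6 → 5 := Hypercyclic.cyclic
  tfae_have 5 → 4 := Cyclic.of_eq_smul_id_add hTS₂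
  tfae_have 4 → 3 := cyclicityCriterion_of_cyclic_prodMap
  tfae_have 3 → 2 := CyclicityCriterion.of_eq_smul_id_add hST
  tfae_finish
end

section
/- Let T and S be bounded linear operators on a Banach space X over 𝕜 (𝕜 = ℝ or ℂ) with T = λ•I + S for some scalar λ ∈ 𝕜. Then T satisfies the Cyclicity Criterion if and only if S satisfies the Cyclicity Criterion. -/
open Filter Topology Polynomial

variable {𝕜 X : Type*} [RCLike 𝕜] [NormedAddCommGroup X] [NormedSpace 𝕜 X]

/- Every polynomial in `S = q(T)` is a polynomial in `T`, since `p(q(T)) = (p ∘ q)(T)`; so the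
data witnessing the criterion for `S` witness it for `T` after composing the polynomials with `q`.
A shift `T = λ + S` is such a relation in both directions, with `q = X ∓ λ`. -/

theorem CyclicityCriterion.of_aeval_eq {T S : X →L[𝕜] X} (q : Polynomial 𝕜) (hq : aeval T q = S)
    (hS : CyclicityCriterion S) : CyclicityCriterion T := by
  obtain ⟨V, W, p, R, hV, hW, hpV, hRW, hpRW⟩ := hS
  have hcomp : ∀ k, aeval T ((p k).comp q) = aeval S (p k) := fun k => by
    rw [aeval_comp, hq]
  refine ⟨V, W, fun k => (p k).comp q, R, hV, hW, ?_, hRW, ?_⟩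
  · simpa only [hcomp] using hpV
  · simpa only [hcomp] using hpRW

theorem cyclicity_criterion_iff_general
    (T S : X →L[𝕜] X) (lam : 𝕜)
    (hTS : T = lam • ContinuousLinearMap.id 𝕜 X + S) :
    CyclicityCriterion T ↔ CyclicityCriterion S := by
  have hT : T = algebraMap 𝕜 (X →L[𝕜] X) lam + S := by
    rw [hTS, Algebra.algebraMap_eq_smul_one]
    rfl
  refine ⟨CyclicityCriterion.of_aeval_eq (Polynomial.X + C lam) ?_,
    CyclicityCriterion.of_aeval_eq (Polynomial.X - C lam) ?_⟩
  · simp [hT, add_comm]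
  · simp [hT]

theorem cyclicity_criterion_iff [CompleteSpace X]
    (T S : X →L[𝕜] X) (lam : 𝕜)
    (hTS : T = lam • ContinuousLinearMap.id 𝕜 X + S) :
    CyclicityCriterion T ↔ CyclicityCriterion S :=
  cyclicity_criterion_iff_general T S lam hTS
end

section
/- Let T = λ•I + S be a hypercyclic bounded linear operator on a separable Banach space X over 𝕜 (𝕜 = ℝ or ℂ), where λ ∈ 𝕜 and S is a bounded linear operator on X. Then for every nonzero polynomial p over 𝕜, the operator p(S) has dense range. -/
open Filter Topology Polynomial

variable {𝕜 X : Type*} [RCLike 𝕜] [NormedAddCommGroup X] [NormedSpace 𝕜 X]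

/-!
If `p(T)` does not have dense range, let `N` be the closure of its range. It is `T`-invariant, so
`T` induces on `X ⧸ N` an operator which is again hypercyclic and is annihilated by `p`. An
algebraic operator with a dense orbit lives on a finite-dimensional space, since its orbits lie in
the finite-dimensional space `𝕜[T] x`. A nonzero finite-dimensional space carries no hypercyclic
operator: the Krylov determinant `G y = det (y, T y, …, T^(m-1) y)` is continuous, homogeneous of
degree `m = dim`, nonzero at a hypercyclic vector `x` and satisfies `G (T y) = det T * G y`, so
`‖G‖` is monotone along the orbit of `x` and cannot get close both to `‖G 0‖ = 0` and to
`‖G (2 • x)‖ > ‖G x‖`. Hence `N = X`. Finally `p(S) = q(T)` with `q = p(X - λ) ≠ 0`.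
-/

theorem not_denseRange_iterate_of_map_eq_mul {E : Type*} [TopologicalSpace E] {f : E → E}
    {g : E → ℝ} {r : ℝ} (hg : Continuous g) (hr : 0 ≤ r) (hgf : ∀ y, g (f y) = r * g y)
    {x y₀ y₁ : E} (hx : 0 ≤ g x) (hy₀ : g y₀ < g x) (hy₁ : g x < g y₁) :
    ¬ DenseRange fun n => f^[n] x := by
  intro hdense
  have hg_iterate : ∀ n, g (f^[n] x) = r ^ n * g x := by
    intro n
    induction n with
    | zero => simp
    | succ n ih => rw [Function.iterate_succ_apply', hgf, ih, pow_succ']; ring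
  rcases le_total r 1 with hr1 | hr1
  · have : g y₁ ≤ g x := hdense.induction_on y₁ (isClosed_le hg continuous_const) fun n => by
      rw [hg_iterate]; exact mul_le_of_le_one_left hx (pow_le_one₀ hr hr1)
    linarith
  · have : g x ≤ g y₀ := hdense.induction_on y₀ (isClosed_le continuous_const hg) fun n => by
      rw [hg_iterate]; exact le_mul_of_one_le_left hx (one_le_pow₀ hr1)
    linarith

theorem Module.End.span_range_pow_apply_eq_span_fin_finrank {K V : Type*} [Field K]
    [AddCommGroup V] [Module K V] [FiniteDimensional K V] (f : Module.End K V) (x : V) :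
    Submodule.span K (Set.range fun n : ℕ => (f ^ n) x) =
      Submodule.span K (Set.range fun j : Fin (Module.finrank K V) => (f ^ (j : ℕ)) x) := by
  refine le_antisymm (Submodule.span_le.mpr ?_) (Submodule.span_mono ?_)
  · rintro _ ⟨n, rfl⟩
    simp only [SetLike.mem_coe]
    rw [LinearMap.pow_eq_aeval_mod_charpoly]
    by_cases h1 : f.charpoly = 1
    · simp [h1]
    have hdeg : (Polynomial.X ^ n %ₘ f.charpoly).natDegree < Module.finrank K V :=
      f.charpoly_natDegree ▸ natDegree_modByMonic_lt _ f.charpoly_monic h1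
    rw [aeval_eq_sum_range' hdeg, LinearMap.sum_apply]
    refine Submodule.sum_mem _ fun i hi => Submodule.smul_mem _ _ (Submodule.subset_span ?_)
    exact ⟨⟨i, Finset.mem_range.mp hi⟩, rfl⟩
  · rintro _ ⟨j, rfl⟩
    exact ⟨j, rfl⟩

section KrylovDet

variable {K V : Type*} {n : ℕ}

noncomputable def krylovDet [CommRing K] [AddCommGroup V] [Module K V]
    (b : Module.Basis (Fin n) K V) (f : Module.End K V) (y : V) : K :=
  b.det fun j => (f ^ (j : ℕ)) y

section CommRing

variable [CommRing K] [AddCommGroup V] [Module K V] (b : Module.Basis (Fin n) K V)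
  (f : Module.End K V)

theorem krylovDet_apply_self (y : V) :
    krylovDet b f (f y) = LinearMap.det f * krylovDet b f y := by
  rw [krylovDet, krylovDet, ← b.det_comp]
  congr 1
  funext j
  simp only [Function.comp_apply, ← Module.End.mul_apply, (Commute.self_pow f j).eq]

theorem krylovDet_smul (c : K) (y : V) : krylovDet b f (c • y) = c ^ n * krylovDet b f y := by
  simp only [krylovDet, map_smul]
  simpa using b.det.map_smul_univ (fun _ => c) fun j : Fin n => (f ^ (j : ℕ)) y

theorem krylovDet_zero [NeZero n] : krylovDet b f 0 = 0 := by
  simp only [krylovDet, map_zero]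
  exact b.det.map_zero

end CommRing

theorem krylovDet_ne_zero_of_span_eq_top [Field K] [AddCommGroup V] [Module K V]
    [FiniteDimensional K V] (b : Module.Basis (Fin (Module.finrank K V)) K V)
    {f : Module.End K V} {y : V}
    (h : Submodule.span K (Set.range fun n : ℕ => (f ^ n) y) = ⊤) : krylovDet b f y ≠ 0 := by
  rw [Module.End.span_range_pow_apply_eq_span_fin_finrank] at h
  refine (b.is_basis_iff_det.mp ⟨?_, h⟩).ne_zero
  exact linearIndependent_of_top_le_span_of_card_eq_finrank h.ge (Fintype.card_fin _)

theorem continuous_krylovDet [NontriviallyNormedField K] [CompleteSpace K]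
    [NormedAddCommGroup V] [NormedSpace K V] [FiniteDimensional K V]
    (b : Module.Basis (Fin n) K V) (f : Module.End K V) : Continuous (krylovDet b f) := by
  refine (continuous_matrix fun i j => ?_).matrix_det.congr fun y => (b.det_apply _).symm
  simp only [Module.Basis.toMatrix_apply]
  exact LinearMap.continuous_of_finiteDimensional ((b.coord i).comp (f ^ (j : ℕ)))

end KrylovDet

variable {E : Type*} [NormedAddCommGroup E] [NormedSpace 𝕜 E]

theorem not_hypercyclic_of_finiteDimensional [FiniteDimensional 𝕜 E] [Nontrivial E]
    (T : E →L[𝕜] E) : ¬ Hypercyclic T := by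
  rintro ⟨x, hx⟩
  let b := Module.finBasis 𝕜 E
  let G := krylovDet b (T : E →ₗ[𝕜] E)
  have hdense : DenseRange fun n => ((T : E →ₗ[𝕜] E) ^ n) x := by
    simpa only [← ContinuousLinearMap.toLinearMap_pow, ContinuousLinearMap.coe_coe, DenseRange]
      using hx
  have hGx : G x ≠ 0 := by
    refine krylovDet_ne_zero_of_span_eq_top b ?_
    have := hdense.mono (Submodule.subset_span (R := 𝕜))
    rwa [Submodule.dense_iff_topologicalClosure_eq_top,
      (Submodule.closed_of_finiteDimensional _).submodule_topologicalClosure_eq] at this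
  refine not_denseRange_iterate_of_map_eq_mul (f := T) (g := fun y => ‖G y‖)
    (continuous_krylovDet b _).norm (norm_nonneg (LinearMap.det (T : E →ₗ[𝕜] E)))
    (fun y => (congrArg norm (krylovDet_apply_self b _ y)).trans (norm_mul _ _))
    (norm_nonneg (G x)) (y₀ := 0) (y₁ := (2 : 𝕜) • x) ?_ ?_ ?_
  · have : NeZero (Module.finrank 𝕜 E) := ⟨Module.finrank_pos.ne'⟩
    simpa [G, krylovDet_zero] using hGx
  · rw [show G ((2 : 𝕜) • x) = _ from krylovDet_smul b _ 2 x, norm_mul, norm_pow,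
      RCLike.norm_ofNat]
    exact lt_mul_of_one_lt_left (norm_pos_iff.mpr hGx)
      (one_lt_pow₀ one_lt_two Module.finrank_pos.ne')
  · simpa only [DenseRange, FunLike.coe_pow_eq_iterate] using hx

theorem Hypercyclic.of_semiconj {T : X →L[𝕜] X} {B : E →L[𝕜] E} (hT : Hypercyclic T)
    {Φ : X → E} (hΦ : Continuous Φ) (hΦ_dense : DenseRange Φ) (h : Function.Semiconj Φ T B) :
    Hypercyclic B := by
  obtain ⟨x, hx⟩ := hT
  refine ⟨Φ x, ?_⟩
  have horbit : (Set.range fun n => (B ^ n) (Φ x)) = Φ '' Set.range fun n => (T ^ n) x := by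
    rw [← Set.range_comp]
    congr 1
    funext n
    simp only [Function.comp_apply, FunLike.coe_pow_eq_iterate, (h.iterate_right n).eq]
  rw [horbit]
  exact hΦ_dense.dense_image hΦ hx

theorem ContinuousLinearMap.semiconj_aeval {Φ : X →L[𝕜] E} {T : X →L[𝕜] X} {B : E →L[𝕜] E}
    (h : Function.Semiconj Φ T B) (p : 𝕜[X]) : Function.Semiconj Φ (aeval T p) (aeval B p) := by
  intro y
  simp only [aeval_eq_sum_range, sum_apply, smul_apply, map_sum, map_smul,
    FunLike.coe_pow_eq_iterate, (h.iterate_right _).eq]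

theorem Hypercyclic.finiteDimensional_of_isAlgebraic {T : E →L[𝕜] E} (hT : Hypercyclic T)
    (halg : IsAlgebraic 𝕜 T) : FiniteDimensional 𝕜 E := by
  obtain ⟨x, hx⟩ := hT
  let W : Submodule 𝕜 E := (Algebra.adjoin 𝕜 {T}).toSubmodule.map
    (ContinuousLinearMap.apply 𝕜 E x : (E →L[𝕜] E) →ₗ[𝕜] E)
  have hW_fg : W.FG := halg.isIntegral.fg_adjoin_singleton.map _
  have : FiniteDimensional 𝕜 W := Module.Finite.iff_fg.mpr hW_fg
  have hW : W = ⊤ := by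
    have horbit : (Set.range fun n => (T ^ n) x) ⊆ W := by
      rintro _ ⟨n, rfl⟩
      exact ⟨T ^ n, Subalgebra.pow_mem _ (Algebra.self_mem_adjoin_singleton 𝕜 T) n, rfl⟩
    exact SetLike.coe_injective <|
      (Submodule.closed_of_finiteDimensional W).closure_eq ▸ (hx.mono horbit).closure_eq
  exact Module.finite_def.mpr (hW ▸ hW_fg)

theorem Hypercyclic.subsingleton_of_isAlgebraic {T : E →L[𝕜] E} (hT : Hypercyclic T)
    (halg : IsAlgebraic 𝕜 T) : Subsingleton E := by
  have := hT.finiteDimensional_of_isAlgebraic halg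
  rcases subsingleton_or_nontrivial E with h | h
  · exact h
  · exact (not_hypercyclic_of_finiteDimensional T hT).elim

theorem Hypercyclic.denseRange_aeval {T : X →L[𝕜] X} (hT : Hypercyclic T) {p : 𝕜[X]}
    (hp : p ≠ 0) : DenseRange (aeval T p) := by
  set N := (LinearMap.range (aeval T p : X →ₗ[𝕜] X)).topologicalClosure
  have hN_closed : IsClosed (N : Set X) := Submodule.isClosed_topologicalClosure _
  have hTN : N ≤ N.comap (T : X →ₗ[𝕜] X) := by
    refine Submodule.topologicalClosure_minimal _ ?_ (hN_closed.preimage T.continuous)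
    rintro _ ⟨y, rfl⟩
    exact Submodule.le_topologicalClosure _
      ⟨T y, (ContinuousLinearMap.semiconj_aeval (Function.Commute.refl _) p y).symm⟩
  let B : X ⧸ N →L[𝕜] X ⧸ N := N.liftQL (N.mkQL ∘L T) fun y hy => by
    simpa [Submodule.Quotient.mk_eq_zero] using hTN hy
  have hB : Function.Semiconj N.mkQL T B := fun _ => rfl
  have hBp : aeval B p = 0 := by
    ext q
    obtain ⟨y, rfl⟩ := N.mkQ_surjective q
    rw [← N.coe_mkQL, ← ContinuousLinearMap.semiconj_aeval hB p y]
    exact (Submodule.Quotient.mk_eq_zero N).mpr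
      (Submodule.le_topologicalClosure _ (LinearMap.mem_range_self _ y))
  have hB_hyp : Hypercyclic B :=
    hT.of_semiconj N.mkQL.continuous N.mkQ_surjective.denseRange hB
  have hN_top : N = ⊤ :=
    Submodule.Quotient.subsingleton_iff.mp (hB_hyp.subsingleton_of_isAlgebraic ⟨p, hp, hBp⟩)
  exact Submodule.dense_iff_topologicalClosure_eq_top.mpr hN_top

theorem denseRange_aeval_of_hypercyclic_shift_general
    (T S : X →L[𝕜] X) (lam : 𝕜)
    (hTS : T = lam • ContinuousLinearMap.id 𝕜 X + S)
    (hT : Hypercyclic T) :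
    ∀ p : Polynomial 𝕜, p ≠ 0 → DenseRange ⇑(aeval S p) := by
  intro p hp
  have hS : aeval T (Polynomial.X + C (-lam)) = S := by
    rw [hTS, map_add, aeval_X, aeval_C, Algebra.algebraMap_eq_smul_one,
      ContinuousLinearMap.one_def, neg_smul]
    abel
  rw [← hS, ← aeval_comp]
  exact hT.denseRange_aeval (comp_X_add_C_ne_zero_iff.mpr hp)

theorem denseRange_aeval_of_hypercyclic_shift
    [CompleteSpace X] [TopologicalSpace.SeparableSpace X]
    (T S : X →L[𝕜] X) (lam : 𝕜)
    (hTS : T = lam • ContinuousLinearMap.id 𝕜 X + S)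
    (hT : Hypercyclic T) :
    ∀ p : Polynomial 𝕜, p ≠ 0 → DenseRange ⇑(aeval S p) :=
  denseRange_aeval_of_hypercyclic_shift_general T S lam hTS hT
end

section
/- Let F be the forward shift operator on ℓ²(ℕ) over 𝕜 (𝕜 = ℝ or ℂ), defined by F(x₀, x₁, x₂, …) = (0, x₀, x₁, …). Then for every scalar λ ∈ 𝕜, the operator λ•I + F is not hypercyclic. -/
/-! The first coordinate semiconjugates `λ • I + F` to multiplication by `λ` on `𝕜`, since `F`
vanishes there. A continuous map with dense range carries dense orbits to dense orbits, but an
orbit `n ↦ λ ^ n * a` in `𝕜` is never dense: it stays in the closed ball of radius `‖a‖` when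
`‖λ‖ ≤ 1`, and avoids the open ball of radius `‖a‖` otherwise. -/

theorem not_denseRange_pow_mul {K : Type*} [NontriviallyNormedField K] (c a : K) :
    ¬ DenseRange fun n : ℕ => c ^ n * a := by
  intro hdense
  by_cases hbdd : ‖c‖ ≤ 1 ∨ a = 0
  · have hsub : Set.range (fun n : ℕ => c ^ n * a) ⊆ Metric.closedBall 0 ‖a‖ := by
      rintro _ ⟨n, rfl⟩
      rcases hbdd with hc | rfl
      · simpa [norm_mul, norm_pow] using
          mul_le_of_le_one_left (norm_nonneg a) (pow_le_one₀ (norm_nonneg c) hc)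
      · simp
    obtain ⟨z, hz⟩ := NormedField.exists_lt_norm K ‖a‖
    have hzball : z ∈ Metric.closedBall 0 ‖a‖ :=
      closure_minimal hsub Metric.isClosed_closedBall (hdense z)
    exact (mem_closedBall_zero_iff.mp hzball).not_gt hz
  · obtain ⟨hc, ha⟩ : 1 < ‖c‖ ∧ a ≠ 0 := by rwa [not_or, not_le] at hbdd
    obtain ⟨n, hmem⟩ :=
      hdense.exists_mem_open Metric.isOpen_ball ⟨0, Metric.mem_ball_self (norm_pos_iff.mpr ha)⟩
    have hge : ‖a‖ ≤ ‖c ^ n * a‖ := by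
      simpa [norm_mul, norm_pow] using
        le_mul_of_one_le_left (norm_nonneg a) (one_le_pow₀ (M₀ := ℝ) hc.le)
    exact (mem_ball_zero_iff.mp hmem).not_ge hge

theorem DenseRange.iterate_of_semiconj {X Y : Type*} [TopologicalSpace X] [TopologicalSpace Y]
    {f : X → Y} (hfd : DenseRange f) (hf : Continuous f) {T : X → X} {S : Y → Y}
    (h : Function.Semiconj f T S) {x : X} (hx : DenseRange fun n : ℕ => T^[n] x) :
    DenseRange fun n : ℕ => S^[n] (f x) := by
  simpa only [Function.comp_def, (h.iterate_right _).eq] using hfd.comp hx hf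

theorem smul_id_add_forward_shift_not_hypercyclic_general {𝕜 : Type*} [RCLike 𝕜]
    (F : lp (fun _ : ℕ => 𝕜) 2 →L[𝕜] lp (fun _ : ℕ => 𝕜) 2)
    (hF0 : ∀ x : lp (fun _ : ℕ => 𝕜) 2, (F x : ∀ _ : ℕ, 𝕜) 0 = 0)
    (lam : 𝕜) :
    ¬ ∃ x : lp (fun _ : ℕ => 𝕜) 2,
        Dense (Set.range fun n : ℕ =>
          ((lam • ContinuousLinearMap.id 𝕜 (lp (fun _ : ℕ => 𝕜) 2) + F) ^ n) x) := by
  rintro ⟨x, hx⟩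
  set T := lam • ContinuousLinearMap.id 𝕜 (lp (fun _ : ℕ => 𝕜) 2) + F
  let head := lp.evalCLM 𝕜 (fun _ : ℕ => 𝕜) 2 0
  have hhead : DenseRange head := Function.Surjective.denseRange fun y =>
    ⟨lp.single 2 0 y, lp.single_apply_self (E := fun _ : ℕ => 𝕜) 2 0 y⟩
  have hsemi : Function.Semiconj head T (lam * ·) := fun y => by
    change (T y : ℕ → 𝕜) 0 = lam * (y : ℕ → 𝕜) 0
    simp only [T, add_apply, smul_apply, ContinuousLinearMap.id_apply, lp.coeFn_add,
      lp.coeFn_smul, Pi.add_apply, Pi.smul_apply, smul_eq_mul, hF0, add_zero]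
  have horbit : DenseRange fun n : ℕ => T^[n] x := by
    unfold DenseRange
    simpa only [FunLike.coe_pow_eq_iterate] using hx
  apply not_denseRange_pow_mul lam (head x)
  simpa only [mul_left_iterate] using hhead.iterate_of_semiconj head.continuous hsemi horbit

/-- For every scalar `λ`, the operator `λ • I + F`, where `F` is the forward shift on
`ℓ²(ℕ)`, is not hypercyclic. -/
theorem smul_id_add_forward_shift_not_hypercyclic {𝕜 : Type*} [RCLike 𝕜]
    (F : lp (fun _ : ℕ => 𝕜) 2 →L[𝕜] lp (fun _ : ℕ => 𝕜) 2)
    (hF0 : ∀ x : lp (fun _ : ℕ => 𝕜) 2, (F x : ∀ _ : ℕ, 𝕜) 0 = 0)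
    (hFs : ∀ (x : lp (fun _ : ℕ => 𝕜) 2) (n : ℕ),
      (F x : ∀ _ : ℕ, 𝕜) (n + 1) = (x : ∀ _ : ℕ, 𝕜) n)
    (lam : 𝕜) :
    ¬ ∃ x : lp (fun _ : ℕ => 𝕜) 2,
        Dense (Set.range fun n : ℕ =>
          ((lam • ContinuousLinearMap.id 𝕜 (lp (fun _ : ℕ => 𝕜) 2) + F) ^ n) x) :=
  smul_id_add_forward_shift_not_hypercyclic_general F hF0 lam
end

section
/- Let X be a Banach space over 𝕜 (𝕜 = ℝ or ℂ) and let (e_n)_{n ≥ 0} be a sequence in X with ‖e_n‖ = 1 for all n, for which there exists a constant C > 0 such that for all natural numbers m ≤ n and all scalars a₀, …, a_{n}, one has ‖∑_{i ≤ m} a_i e_i‖ ≤ C ‖∑_{i ≤ n} a_i e_i‖ (i.e., (e_n) is a normalized basic sequence). Let λ ∈ 𝕜, let J ⊆ ℕ be an infinite set, and let K be a bounded linear operator on X such that K e_j = 2 e_{j+1} − λ e_j for every j ∈ J. Then K is not a compact operator; in fact, the family (K e_j)_{j ∈ J} has no convergent subsequence. -/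
/-!
For `j < j'` in `J`, the vector `K e_{j'} - K e_j = λ e_j - 2 e_{j+1} - λ e_{j'} + 2 e_{j'+1}`
has coefficient `2` at `e_{j'+1}`, and the basis projection onto `span {e_i | i ≤ j'}` has norm
at most `C`; hence `2 = ‖2 e_{j'+1}‖ ≤ (1 + C) ‖K e_{j'} - K e_j‖`. So `(K e_j)_{j ∈ J}` is
uniformly separated and has no convergent subsequence, whereas a compact `K` would produce one
from the bounded sequence `(e_j)_{j ∈ J}`.
-/

open Filter Topology Finset

section
variable {R X : Type*} [SeminormedAddCommGroup X]

theorem norm_last_term_le_of_basic [SMul R X] {e : ℕ → X} {C : ℝ}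
    (hb : ∀ m n : ℕ, m ≤ n → ∀ a : ℕ → R,
      ‖∑ i ∈ range (m + 1), a i • e i‖ ≤ C * ‖∑ i ∈ range (n + 1), a i • e i‖)
    (a : ℕ → R) (n : ℕ) :
    ‖a (n + 1) • e (n + 1)‖ ≤ (1 + C) * ‖∑ i ∈ range (n + 2), a i • e i‖ := by
  calc ‖a (n + 1) • e (n + 1)‖
      = ‖∑ i ∈ range (n + 2), a i • e i - ∑ i ∈ range (n + 1), a i • e i‖ := by
        rw [sum_range_succ _ (n + 1), add_sub_cancel_left]
    _ ≤ ‖∑ i ∈ range (n + 2), a i • e i‖ + ‖∑ i ∈ range (n + 1), a i • e i‖ := norm_sub_le _ _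
    _ ≤ (1 + C) * ‖∑ i ∈ range (n + 2), a i • e i‖ := by linarith [hb n (n + 1) n.le_succ a]

theorem sum_range_single_smul [Semiring R] [Module R X] (e : ℕ → X) {k N : ℕ} (hk : k < N) (c : R) :
    ∑ i ∈ range N, (Pi.single k c : ℕ → R) i • e i = c • e k := by
  rw [sum_eq_single_of_mem k (mem_range.2 hk) fun i _ hi => by simp [hi]]
  simp
end

theorem two_le_norm_sub_of_shift_like {𝕜 X : Type*} [RCLike 𝕜] [SeminormedAddCommGroup X]
    [NormedSpace 𝕜 X] {e : ℕ → X} (he : ∀ n, ‖e n‖ = 1) {C : ℝ}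
    (hb : ∀ m n : ℕ, m ≤ n → ∀ a : ℕ → 𝕜,
      ‖∑ i ∈ range (m + 1), a i • e i‖ ≤ C * ‖∑ i ∈ range (n + 1), a i • e i‖)
    {lam : 𝕜} {x x' : X} {j j' : ℕ} (hj : j < j')
    (hx : x = (2 : 𝕜) • e (j + 1) - lam • e j) (hx' : x' = (2 : 𝕜) • e (j' + 1) - lam • e j') :
    2 ≤ (1 + C) * ‖x' - x‖ := by
  set a : ℕ → 𝕜 := Pi.single j lam - Pi.single (j + 1) 2 - Pi.single j' lam + Pi.single (j' + 1) 2
  have hsum : ∑ i ∈ range (j' + 2), a i • e i = x' - x := by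
    simp only [a, Pi.add_apply, Pi.sub_apply, add_smul, sub_smul, sum_add_distrib, sum_sub_distrib]
    rw [sum_range_single_smul e (by omega), sum_range_single_smul e (by omega),
      sum_range_single_smul e (by omega), sum_range_single_smul e (by omega), hx, hx']
    abel
  have hlast : a (j' + 1) = 2 := by simp [a, show j' + 1 ≠ j by omega, show j' ≠ j by omega]
  simpa [hsum, hlast, norm_smul, he] using norm_last_term_le_of_basic hb a j'

theorem not_tendsto_of_le_dist_succ {α : Type*} [PseudoMetricSpace α] {u : ℕ → α} {ε : ℝ}
    (hε : 0 < ε) (hu : ∀ k, ε ≤ dist (u (k + 1)) (u k)) (L : α) : ¬ Tendsto u atTop (𝓝 L) := by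
  intro hL
  obtain ⟨N, hN⟩ := Metric.cauchySeq_iff.1 hL.cauchySeq ε hε
  exact (hu N).not_gt (hN (N + 1) N.le_succ N le_rfl)

theorem IsCompactOperator.exists_subseq_tendsto {𝕜 E F : Type*} [NontriviallyNormedField 𝕜]
    [SeminormedAddCommGroup E] [NormedSpace 𝕜 E] [SeminormedAddCommGroup F] [NormedSpace 𝕜 F]
    {f : E →ₗ[𝕜] F} (hf : IsCompactOperator f) {u : ℕ → E}
    (hu : Bornology.IsBounded (Set.range u)) :
    ∃ L, ∃ ψ : ℕ → ℕ, StrictMono ψ ∧ Tendsto (f ∘ u ∘ ψ) atTop (𝓝 L) := by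
  obtain ⟨S, hS, hfS⟩ := hf.image_subset_compact_of_bounded hu
  obtain ⟨L, -, ψ, hψ, hL⟩ := hS.tendsto_subseq fun k => hfS ⟨u k, Set.mem_range_self k, rfl⟩
  exact ⟨L, ψ, hψ, hL⟩

/-- If `(e_n)` is a normalized basic sequence and `K e_j = 2 e_{j+1} - λ e_j` for all `j` in an
infinite set `J`, then `K` is not compact: the family `(K e_j)_{j ∈ J}` has no convergent
subsequence. -/
theorem not_compact_of_shift_like {𝕜 X : Type*} [RCLike 𝕜] [NormedAddCommGroup X]
    [NormedSpace 𝕜 X] (e : ℕ → X) (he : ∀ n, ‖e n‖ = 1)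
    (hbasic : ∃ C > (0 : ℝ), ∀ m n : ℕ, m ≤ n → ∀ a : ℕ → 𝕜,
      ‖∑ i ∈ Finset.range (m + 1), a i • e i‖ ≤ C * ‖∑ i ∈ Finset.range (n + 1), a i • e i‖)
    (lam : 𝕜) (J : Set ℕ) (hJ : J.Infinite) (K : X →L[𝕜] X)
    (hK : ∀ j ∈ J, K (e j) = (2 : 𝕜) • e (j + 1) - lam • e j) :
    ¬ IsCompactOperator ⇑K ∧
      ¬ ∃ (φ : ℕ → ℕ) (L : X), StrictMono φ ∧ (∀ k, φ k ∈ J) ∧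
          Tendsto (fun k => K (e (φ k))) atTop (𝓝 L) := by
  obtain ⟨C, hC, hb⟩ := hbasic
  have hno : ¬ ∃ (φ : ℕ → ℕ) (L : X), StrictMono φ ∧ (∀ k, φ k ∈ J) ∧
      Tendsto (fun k => K (e (φ k))) atTop (𝓝 L) := by
    rintro ⟨φ, L, hφ, hφJ, hL⟩
    refine not_tendsto_of_le_dist_succ (ε := 2 / (1 + C)) (by positivity) (fun k => ?_) L hL
    rw [dist_eq_norm, div_le_iff₀' (by positivity)]
    exact two_le_norm_sub_of_shift_like he hb (hφ k.lt_succ_self) (hK _ (hφJ k))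
      (hK _ (hφJ (k + 1)))
  refine ⟨fun hc => hno ?_, hno⟩
  have he_bdd : Bornology.IsBounded (Set.range (e ∘ Nat.nth (· ∈ J))) :=
    isBounded_iff_forall_norm_le.2 ⟨1, by rintro _ ⟨k, rfl⟩; simp [he]⟩
  obtain ⟨L, ψ, hψ, hL⟩ := IsCompactOperator.exists_subseq_tendsto (f := (K : X →ₗ[𝕜] X)) hc he_bdd
  exact ⟨Nat.nth (· ∈ J) ∘ ψ, L, (Nat.nth_strictMono hJ).comp hψ,
    fun k => Nat.nth_mem_of_infinite hJ _, hL⟩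
end

section
/- Let X be a Banach space over 𝕜 (𝕜 = ℝ or ℂ) with the scalar-plus-compact property, i.e., every bounded linear operator on X is of the form λ•I + K with λ ∈ 𝕜 and K a compact operator. Let (e_n)_{n ≥ 0} be a sequence in X with ‖e_n‖ = 1 for all n, for which there exists a constant C > 0 such that for all natural numbers m ≤ n and all scalars a₀, …, a_{n}, one has ‖∑_{i ≤ m} a_i e_i‖ ≤ C ‖∑_{i ≤ n} a_i e_i‖ (i.e., (e_n) is a normalized basic sequence), and let J ⊆ ℕ be an infinite set. Then there is no bounded linear operator T on X satisfying T e_j = 2 e_{j+1} for every j ∈ J. -/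
/-!
Write `T = λ I + K` with `K` compact, so that `K e_j = 2 e_{j+1} - λ e_j` for `j ∈ J`. Along
indices `j_0 < j_1 < ⋯` of `J` with gaps at least two these vectors are supported on disjoint
blocks of the basic sequence, so the bounded partial-sum projections separate them uniformly:
`2 ≤ (1 + C) ‖K e_{j_p}‖ ≤ (1 + C) C ‖K e_{j_p} - K e_{j_q}‖`. This contradicts the compactness
of `K`, which maps the bounded sequence `(e_{j_p})` to one with arbitrarily close terms.
-/

open Submodule

def IsBasicSequence (𝕜 : Type*) {X : Type*} [Semiring 𝕜] [SeminormedAddCommGroup X]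
    [Module 𝕜 X] (e : ℕ → X) (C : ℝ) : Prop :=
  ∀ m n : ℕ, m ≤ n → ∀ a : ℕ → 𝕜,
    ‖∑ i ∈ Finset.range (m + 1), a i • e i‖ ≤ C * ‖∑ i ∈ Finset.range (n + 1), a i • e i‖

namespace IsBasicSequence

section Ring

variable {𝕜 X : Type*} [Ring 𝕜] [SeminormedAddCommGroup X] [Module 𝕜 X] {e : ℕ → X} {C : ℝ}

theorem norm_le_mul_norm_add (hb : IsBasicSequence 𝕜 e C) {m n : ℕ} (hmn : m ≤ n) {x y : X}
    (hx : x ∈ span 𝕜 (e '' Set.Iic m)) (hy : y ∈ span 𝕜 (e '' Set.Ioc m n)) :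
    ‖x‖ ≤ C * ‖x + y‖ := by
  classical
  rw [← Finset.coe_Iic, mem_span_image_finset_iff_exists_fun'] at hx
  rw [← Finset.coe_Ioc, mem_span_image_finset_iff_exists_fun'] at hy
  obtain ⟨a, rfl⟩ := hx
  obtain ⟨b, rfl⟩ := hy
  let c : ℕ → 𝕜 := fun i => if i ≤ m then a i else b i
  have hc_Iic : ∑ i ∈ Finset.Iic m, c i • e i = ∑ i ∈ Finset.Iic m, a i • e i :=
    Finset.sum_congr rfl fun i hi => by simp [c, Finset.mem_Iic.mp hi]
  have hc_Ioc : ∑ i ∈ Finset.Ioc m n, c i • e i = ∑ i ∈ Finset.Ioc m n, b i • e i :=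
    Finset.sum_congr rfl fun i hi => by simp [c, (Finset.mem_Ioc.mp hi).1.not_ge]
  have := hb m n hmn c
  rwa [Nat.range_succ_eq_Iic, Nat.range_succ_eq_Iic, ← Finset.Iic_union_Ioc_eq_Iic hmn,
    Finset.sum_union (Finset.Iic_disjoint_Ioc le_rfl), hc_Iic, hc_Ioc] at this

theorem smul_sub_smul_mem_span {s : Set ℕ} {j : ℕ} (hj : j ∈ s) (hj₁ : j + 1 ∈ s) (a b : 𝕜) :
    a • e (j + 1) - b • e j ∈ span 𝕜 (e '' s) :=
  sub_mem (smul_mem _ _ (subset_span (Set.mem_image_of_mem e hj₁)))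
    (smul_mem _ _ (subset_span (Set.mem_image_of_mem e hj)))

theorem norm_le_mul_norm_sub_of_lt (hb : IsBasicSequence 𝕜 e C) {j k : ℕ} (hjk : j + 1 < k)
    (a b : 𝕜) :
    ‖a • e (j + 1) - b • e j‖ ≤
      C * ‖(a • e (j + 1) - b • e j) - (a • e (k + 1) - b • e k)‖ := by
  rw [sub_eq_add_neg _ (a • e (k + 1) - b • e k)]
  refine hb.norm_le_mul_norm_add (m := j + 1) (n := k + 1) (by omega)
    (smul_sub_smul_mem_span ?_ ?_ a b)
    (neg_mem (smul_sub_smul_mem_span ?_ ?_ a b)) <;> simp only [Set.mem_Iic, Set.mem_Ioc] <;> omega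

end Ring

variable {𝕜 X : Type*} [NormedField 𝕜] [SeminormedAddCommGroup X] [NormedSpace 𝕜 X]
  {e : ℕ → X} {C : ℝ}

theorem norm_le_one_add_mul_norm_smul_sub_smul (hb : IsBasicSequence 𝕜 e C)
    (he : ∀ n, ‖e n‖ = 1) (j : ℕ) (a b : 𝕜) :
    ‖a‖ ≤ (1 + C) * ‖a • e (j + 1) - b • e j‖ := by
  have hb_le : ‖b‖ ≤ C * ‖a • e (j + 1) - b • e j‖ := by
    have := hb.norm_le_mul_norm_add (Nat.le_succ j) (x := -(b • e j)) (y := a • e (j + 1))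
      (neg_mem (smul_mem _ _ (subset_span (Set.mem_image_of_mem e (Set.mem_Iic.2 le_rfl)))))
      (smul_mem _ _ (subset_span (Set.mem_image_of_mem e (by simp))))
    rwa [norm_neg, norm_smul, he, mul_one, neg_add_eq_sub] at this
  calc ‖a‖ = ‖(a • e (j + 1) - b • e j) + b • e j‖ := by rw [sub_add_cancel, norm_smul, he, mul_one]
    _ ≤ ‖a • e (j + 1) - b • e j‖ + ‖b‖ := by
      grw [norm_add_le, norm_smul, he, mul_one]
    _ ≤ (1 + C) * ‖a • e (j + 1) - b • e j‖ := by linarith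

end IsBasicSequence

theorem IsCompact.exists_lt_dist_lt {α : Type*} [PseudoMetricSpace α] {S : Set α}
    (hS : IsCompact S) {u : ℕ → α} (hu : ∀ n, u n ∈ S) {ε : ℝ} (hε : 0 < ε) :
    ∃ p q, p < q ∧ dist (u p) (u q) < ε := by
  obtain ⟨x, -, φ, hφ, hlim⟩ := hS.tendsto_subseq hu
  obtain ⟨N, hN⟩ := Metric.cauchySeq_iff'.mp hlim.cauchySeq ε hε
  exact ⟨φ N, φ (N + 1), hφ N.lt_succ_self, by rw [dist_comm]; exact hN (N + 1) N.le_succ⟩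

theorem IsCompactOperator.exists_lt_dist_lt {𝕜 X Y : Type*} [NontriviallyNormedField 𝕜]
    [SeminormedAddCommGroup X] [NormedSpace 𝕜 X] [SeminormedAddCommGroup Y] [NormedSpace 𝕜 Y]
    {K : X →L[𝕜] Y} (hK : IsCompactOperator K) {u : ℕ → X}
    (hu : Bornology.IsBounded (Set.range u)) {ε : ℝ} (hε : 0 < ε) :
    ∃ p q, p < q ∧ dist (K (u p)) (K (u q)) < ε := by
  obtain ⟨S, hS, hKS⟩ :=
    IsCompactOperator.image_subset_compact_of_bounded (f := (K : X →ₗ[𝕜] Y)) hK hu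
  exact hS.exists_lt_dist_lt (fun n => hKS ⟨u n, Set.mem_range_self n, rfl⟩) hε

theorem Set.Infinite.exists_seq_add_one_lt {J : Set ℕ} (hJ : J.Infinite) :
    ∃ j : ℕ → ℕ, (∀ n, j n ∈ J) ∧ ∀ p q, p < q → j p + 1 < j q :=
  ⟨fun n => Nat.nth (· ∈ J) (2 * n), fun n => Nat.nth_mem_of_infinite hJ _, fun p q hpq =>
    Nat.lt_of_le_of_lt (Nat.nth_strictMono hJ (Nat.lt_succ_self (2 * p)))
      (Nat.nth_strictMono hJ (by omega))⟩

/-- On a Banach space with the scalar-plus-compact property, no bounded operator `T` can act as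
`T e_j = 2 e_{j+1}` along an infinite set `J` of indices of a normalized basic sequence. -/
theorem no_doubling_shift_on_scalar_plus_compact {𝕜 X : Type*} [RCLike 𝕜]
    [NormedAddCommGroup X] [NormedSpace 𝕜 X]
    (hX : ∀ A : X →L[𝕜] X, ∃ (lam : 𝕜) (K : X →L[𝕜] X),
      IsCompactOperator ⇑K ∧ A = lam • ContinuousLinearMap.id 𝕜 X + K)
    (e : ℕ → X) (he : ∀ n, ‖e n‖ = 1)
    (hbasic : ∃ C > (0 : ℝ), ∀ m n : ℕ, m ≤ n → ∀ a : ℕ → 𝕜,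
      ‖∑ i ∈ Finset.range (m + 1), a i • e i‖ ≤ C * ‖∑ i ∈ Finset.range (n + 1), a i • e i‖)
    (J : Set ℕ) (hJ : J.Infinite) :
    ¬ ∃ T : X →L[𝕜] X, ∀ j ∈ J, T (e j) = (2 : 𝕜) • e (j + 1) := by
  rintro ⟨T, hT⟩
  obtain ⟨C, hC, hb⟩ := hbasic
  obtain ⟨lam, K, hK, rfl⟩ := hX T
  obtain ⟨j, hjJ, hj⟩ := hJ.exists_seq_add_one_lt
  have hKe (n : ℕ) : K (e (j n)) = (2 : 𝕜) • e (j n + 1) - lam • e (j n) := by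
    rw [eq_sub_iff_add_eq, add_comm, ← hT _ (hjJ n)]
    simp
  have hbdd : Bornology.IsBounded (Set.range (e ∘ j)) :=
    isBounded_iff_forall_norm_le.2 ⟨1, by simp [he]⟩
  obtain ⟨p, q, hpq, hdist⟩ := hK.exists_lt_dist_lt hbdd (ε := 2 / ((1 + C) * C)) (by positivity)
  have hlow := IsBasicSequence.norm_le_one_add_mul_norm_smul_sub_smul hb he (j p) 2 lam
  have hsep := IsBasicSequence.norm_le_mul_norm_sub_of_lt hb (hj p q hpq) 2 lam
  rw [Function.comp_apply, Function.comp_apply, dist_eq_norm, hKe, hKe,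
    lt_div_iff₀ (by positivity)] at hdist
  rw [RCLike.norm_ofNat] at hlow
  nlinarith
end
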